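/- Let g be non-increasing with g(x) = o(1/(x² log² x)), 0 < C = ∫_{ℝ²} g(‖x‖)dx < ∞, b constant, r_ρ = sqrt((log ρ + b)/(Cρ)), and let ε ∈ (0, 1/4). Then lim_{ρ→∞} ρ^{1/2} exp(−(1/2)·(log ρ + b)/C · ∫_{D(0, r_ρ^{-ε})} g(‖x‖)dx) = e^{−b/2}, and lim_{ρ→∞} 4 ((log ρ + b)/(Cρ))^{1−ε} · ρ · e^{−(log ρ + b)/4} = 0. -/

import Mathlib

/-!
Write `L = log ρ + b` and `R = r_ρ^{-ε}`. Splitting the disc integral as `C - T R`, where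
`T R` is the integral of `g ‖x‖` outside the disc, the first expression equals
`exp (-b/2 + L · T R / (2C))`, so it suffices that `L · T R → 0`. In polar coordinates
`T R` is a multiple of `∫_R^∞ y g(y) dy`, and comparing with `∫_R^∞ dy / (y log² y) = 1 / log R`
the decay of `g` gives `T R = o(1 / log R)`, while `log R = (ε/2)(L - log L + log C - b) ~ (ε/2) L`.
The second expression is `4 C^{ε-1} e^{-εb} L^{1-ε} e^{-(1/4-ε) L}`, which tends to `0`
because `ε < 1/4`.
-/

open MeasureTheory Filter Real Set Metric Module Topology

lemma hasDerivAt_neg_inv_log {y : ℝ} (hy : 1 < y) :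
    HasDerivAt (fun t => -(log t)⁻¹) (y * log y ^ 2)⁻¹ y := by
  have hinv : HasDerivAt (fun t => (log t)⁻¹) (-y⁻¹ / log y ^ 2) y :=
    (hasDerivAt_log (by linarith)).inv (log_pos hy).ne'
  exact hinv.neg.congr_deriv (by field_simp)

lemma integrableOn_Ioi_inv_mul_log_sq {R : ℝ} (hR : 1 < R) :
    IntegrableOn (fun y => (y * log y ^ 2)⁻¹) (Ioi R) := by
  refine integrableOn_Ioi_deriv_of_nonneg' (l := 0)
    (fun y hy => hasDerivAt_neg_inv_log (hR.trans_le hy)) (fun y hy => ?_) ?_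
  · have := hR.trans hy
    have := log_pos this
    positivity
  · simpa using (tendsto_inv_atTop_zero.comp tendsto_log_atTop).neg

lemma integral_Ioi_inv_mul_log_sq {R : ℝ} (hR : 1 < R) :
    ∫ y in Ioi R, (y * log y ^ 2)⁻¹ = (log R)⁻¹ := by
  rw [integral_Ioi_of_hasDerivAt_of_nonneg' (l := 0)
    (fun y hy => hasDerivAt_neg_inv_log (hR.trans_le hy))
    (fun y hy => by have := hR.trans hy; have := log_pos this; positivity)
    (by simpa using (tendsto_inv_atTop_zero.comp tendsto_log_atTop).neg)]
  ring

lemma tendsto_log_mul_setIntegral_Ioi {f : ℝ → ℝ} (hf : ∀ᶠ y in atTop, 0 ≤ f y)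
    (hsmall : Tendsto (fun y => f y * (y * log y ^ 2)) atTop (𝓝 0)) :
    Tendsto (fun R => log R * ∫ y in Ioi R, f y) atTop (𝓝 0) := by
  rw [Metric.tendsto_nhds]
  intro δ hδ
  obtain ⟨M, hM⟩ := eventually_atTop.1 (hf.and (hsmall.eventually_le_const (half_pos hδ)))
  filter_upwards [eventually_gt_atTop (max M 1)] with R hR
  have hR1 : 1 < R := (le_max_right _ _).trans_lt hR
  have hlogR : 0 < log R := log_pos hR1
  have hf_le : ∀ y ∈ Ioi R, 0 ≤ f y ∧ f y ≤ δ / 2 * (y * log y ^ 2)⁻¹ := fun y hy => by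
    have hy1 : 1 < y := hR1.trans hy
    have : 0 < y * log y ^ 2 := by have := log_pos hy1; positivity
    obtain ⟨h0, hle⟩ := hM y ((le_max_left _ _).trans (hR.trans hy).le)
    exact ⟨h0, (le_mul_inv_iff₀ this).2 hle⟩
  have hint_nonneg : 0 ≤ ∫ y in Ioi R, f y :=
    setIntegral_nonneg measurableSet_Ioi fun y hy => (hf_le y hy).1
  have hint_le : ∫ y in Ioi R, f y ≤ δ / 2 * (log R)⁻¹ := calc
    ∫ y in Ioi R, f y ≤ ∫ y in Ioi R, δ / 2 * (y * log y ^ 2)⁻¹ :=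
      integral_mono_of_nonneg
        (ae_restrict_of_forall_mem measurableSet_Ioi fun y hy => (hf_le y hy).1)
        ((integrableOn_Ioi_inv_mul_log_sq hR1).const_mul _)
        (ae_restrict_of_forall_mem measurableSet_Ioi fun y hy => (hf_le y hy).2)
    _ = δ / 2 * (log R)⁻¹ := by rw [integral_const_mul, integral_Ioi_inv_mul_log_sq hR1]
  rw [Real.dist_0_eq_abs, abs_of_nonneg (mul_nonneg hlogR.le hint_nonneg)]
  calc log R * ∫ y in Ioi R, f y ≤ log R * (δ / 2 * (log R)⁻¹) := by gcongr
    _ = δ / 2 := by field_simp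
    _ < δ := half_lt_self hδ

section Polar

variable {E : Type*} [NormedAddCommGroup E] [NormedSpace ℝ E] [Nontrivial E]
  [FiniteDimensional ℝ E] [MeasurableSpace E] [BorelSpace E] (μ : Measure E) [μ.IsAddHaarMeasure]

lemma setIntegral_compl_closedBall_eq (f : ℝ → ℝ) {R : ℝ} (hR : 0 ≤ R) :
    ∫ x in (closedBall (0 : E) R)ᶜ, f ‖x‖ ∂μ =
      finrank ℝ E * μ.real (ball 0 1) * ∫ y in Ioi R, y ^ (finrank ℝ E - 1) * f y := by
  have hball : ∀ x : E, (closedBall 0 R)ᶜ.indicator (fun x => f ‖x‖) x = (Ioi R).indicator f ‖x‖ :=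
    fun x => by by_cases h : R < ‖x‖ <;> simp [h]
  have hind : ∀ y : ℝ, y ^ (finrank ℝ E - 1) • (Ioi R).indicator f y =
      (Ioi R).indicator (fun y => y ^ (finrank ℝ E - 1) * f y) y := fun y => by
    simp [indicator_apply]
  rw [← integral_indicator measurableSet_closedBall.compl, funext hball,
    integral_fun_norm_addHaar μ, funext hind, setIntegral_indicator measurableSet_Ioi,
    Ioi_inter_Ioi, max_eq_right hR, nsmul_eq_mul, smul_eq_mul, mul_assoc]

lemma tendsto_log_mul_setIntegral_compl_closedBall {g : ℝ → ℝ} (hg : ∀ x, 0 ≤ x → 0 ≤ g x)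
    (hsmall : Tendsto (fun x => g x * x ^ finrank ℝ E * log x ^ 2) atTop (𝓝 0)) :
    Tendsto (fun R => log R * ∫ x in (closedBall (0 : E) R)ᶜ, g ‖x‖ ∂μ) atTop (𝓝 0) := by
  set d := finrank ℝ E
  have hpow : ∀ y : ℝ, y ^ (d - 1) * y = y ^ d := fun y => by
    rw [← pow_succ, Nat.sub_add_cancel finrank_pos]
  have hradial := tendsto_log_mul_setIntegral_Ioi (f := fun y => y ^ (d - 1) * g y)
    (eventually_ge_atTop 0 |>.mono fun y hy => mul_nonneg (pow_nonneg hy _) (hg y hy))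
    (hsmall.congr fun y => by rw [← hpow]; ring)
  have hscaled := hradial.const_mul (d * μ.real (ball 0 1))
  rw [mul_zero] at hscaled
  refine hscaled.congr' ?_
  filter_upwards [eventually_ge_atTop 0] with R hR
  rw [setIntegral_compl_closedBall_eq μ g hR]
  ring

end Polar

lemma tendsto_log_rpow_sqrt_div_div (b : ℝ) {C : ℝ} (hC : 0 < C) (ε : ℝ) :
    Tendsto (fun ρ => log (sqrt ((log ρ + b) / (C * ρ)) ^ (-ε)) / (log ρ + b)) atTop
      (𝓝 (ε / 2)) := by
  have hL : Tendsto (fun ρ => log ρ + b) atTop atTop :=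
    tendsto_atTop_add_const_right _ b tendsto_log_atTop
  have hF : Tendsto (fun t => ε / 2 * (1 - log t / t + (log C - b) / t)) atTop (𝓝 (ε / 2)) := by
    have h1 : Tendsto (fun t => log t / t) atTop (𝓝 0) :=
      isLittleO_log_id_atTop.tendsto_div_nhds_zero
    have h2 : Tendsto (fun t => (log C - b) / t) atTop (𝓝 0) :=
      tendsto_const_nhds.div_atTop tendsto_id
    simpa using ((h1.const_sub 1).add h2).const_mul (ε / 2)
  refine (hF.comp hL).congr' ?_
  filter_upwards [eventually_gt_atTop 0, hL.eventually_gt_atTop 0] with ρ hρ hLρ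
  have hq : 0 < (log ρ + b) / (C * ρ) := by positivity
  rw [Function.comp_apply, log_rpow (sqrt_pos.2 hq), log_sqrt hq.le,
    log_div hLρ.ne' (by positivity), log_mul hC.ne' hρ.ne']
  field_simp
  ring

lemma tendsto_mul_comp_rpow_sqrt_div {T : ℝ → ℝ}
    (hT : Tendsto (fun R => log R * T R) atTop (𝓝 0)) (b : ℝ) {C ε : ℝ} (hC : 0 < C)
    (hε : 0 < ε) :
    Tendsto (fun ρ => (log ρ + b) * T (sqrt ((log ρ + b) / (C * ρ)) ^ (-ε))) atTop (𝓝 0) := by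
  have hratio := tendsto_log_rpow_sqrt_div_div b hC ε
  set R := fun ρ : ℝ => sqrt ((log ρ + b) / (C * ρ)) ^ (-ε)
  have hL : Tendsto (fun ρ => log ρ + b) atTop atTop :=
    tendsto_atTop_add_const_right _ b tendsto_log_atTop
  have hlogR : Tendsto (fun ρ => log (R ρ)) atTop atTop := by
    refine (Tendsto.pos_mul_atTop (half_pos hε) hratio hL).congr' ?_
    filter_upwards [hL.eventually_gt_atTop 0] with ρ hρ
    exact div_mul_cancel₀ _ hρ.ne'
  have hR : Tendsto R atTop atTop :=
    tendsto_atTop_mono (fun ρ => log_le_self (rpow_nonneg (sqrt_nonneg _) _)) hlogR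
  have hprod := (hratio.inv₀ (half_pos hε).ne').mul (hT.comp hR)
  rw [mul_zero] at hprod
  refine hprod.congr' ?_
  filter_upwards [hlogR.eventually_ne_atTop 0] with ρ hρ
  simp only [R, Function.comp_apply, inv_div] at hρ ⊢
  field_simp

lemma tendsto_div_rpow_mul_mul_exp_neg (b : ℝ) {C ε : ℝ} (hC : 0 < C) (hε : ε < 1 / 4) :
    Tendsto (fun ρ => ((log ρ + b) / (C * ρ)) ^ (1 - ε) * ρ * exp (-(log ρ + b) / 4))
      atTop (𝓝 0) := by
  have hL : Tendsto (fun ρ => log ρ + b) atTop atTop :=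
    tendsto_atTop_add_const_right _ b tendsto_log_atTop
  have hscaled := ((tendsto_rpow_mul_exp_neg_mul_atTop_nhds_zero (1 - ε) (1 / 4 - ε)
    (by linarith)).comp hL).const_mul (C ^ (ε - 1) * exp (-(ε * b)))
  rw [mul_zero] at hscaled
  refine hscaled.congr' ?_
  filter_upwards [eventually_gt_atTop 0, hL.eventually_gt_atTop 0] with ρ hρ hLρ
  rw [Function.comp_apply, div_rpow hLρ.le (by positivity), mul_rpow hC.le hρ.le,
    rpow_def_of_pos hC, rpow_def_of_pos hC, rpow_def_of_pos hρ]
  field_simp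
  rw [← exp_log hρ]
  simp only [log_exp, ← exp_add]
  congr 1
  ring

theorem stmt_19_general (g : ℝ → ℝ) (C b ε : ℝ)
    (hg01 : ∀ x, 0 ≤ x → 0 ≤ g x ∧ g x ≤ 1)
    (hsmall : Tendsto (fun x : ℝ => g x * x ^ 2 * (Real.log x) ^ 2) atTop (nhds 0))
    (hint : Integrable (fun x : EuclideanSpace ℝ (Fin 2) => g ‖x‖))
    (hC : C = ∫ x : EuclideanSpace ℝ (Fin 2), g ‖x‖) (hCpos : 0 < C)
    (hε : 0 < ε) (hε4 : ε < 1 / 4) :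
    Tendsto
        (fun ρ : ℝ =>
          ρ ^ ((1 : ℝ) / 2) *
            Real.exp
              (-((1 / 2) * ((Real.log ρ + b) / C) *
                  ∫ x in Metric.closedBall (0 : EuclideanSpace ℝ (Fin 2))
                      ((Real.sqrt ((Real.log ρ + b) / (C * ρ))) ^ (-ε : ℝ)),
                    g ‖x‖)))
        atTop (nhds (Real.exp (-b / 2))) ∧
      Tendsto
        (fun ρ : ℝ =>
          4 * ((Real.log ρ + b) / (C * ρ)) ^ ((1 : ℝ) - ε) * ρ *
            Real.exp (-(Real.log ρ + b) / 4))
        atTop (nhds 0) := by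
  refine ⟨?_, by simpa [mul_assoc] using (tendsto_div_rpow_mul_mul_exp_neg b hCpos hε4).const_mul 4⟩
  have hball : ∀ r, ∫ x in closedBall (0 : EuclideanSpace ℝ (Fin 2)) r, g ‖x‖ =
      C - ∫ x in (closedBall (0 : EuclideanSpace ℝ (Fin 2)) r)ᶜ, g ‖x‖ := fun r => by
    rw [hC, ← integral_add_compl measurableSet_closedBall hint, add_sub_cancel_right]
  have hsmall' : Tendsto (fun x => g x * x ^ finrank ℝ (EuclideanSpace ℝ (Fin 2)) * log x ^ 2)
      atTop (𝓝 0) := by rwa [finrank_euclideanSpace_fin]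
  have htail := tendsto_mul_comp_rpow_sqrt_div
    (tendsto_log_mul_setIntegral_compl_closedBall volume (fun x hx => (hg01 x hx).1) hsmall')
    b hCpos hε
  have hexponent := (htail.div_const (2 * C)).const_add (-b / 2)
  rw [zero_div, add_zero] at hexponent
  refine ((continuous_exp.tendsto _).comp hexponent).congr' ?_
  filter_upwards [eventually_gt_atTop 0] with ρ hρ
  rw [Function.comp_apply, hball, rpow_def_of_pos hρ, ← exp_add]
  congr 1
  field_simp
  ring

/-- Let `g` be non-increasing with `g(x) = o(1/(x² log² x))`,
`0 < C = ∫_{ℝ²} g(‖x‖)dx < ∞`, `b` constant, `r_ρ = sqrt((log ρ + b)/(Cρ))`,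
and let `ε ∈ (0, 1/4)`.  Then
`lim_{ρ→∞} ρ^{1/2} exp(−(1/2)·(log ρ + b)/C · ∫_{D(0, r_ρ^{-ε})} g(‖x‖)dx) = e^{−b/2}`,
and `lim_{ρ→∞} 4 ((log ρ + b)/(Cρ))^{1−ε} · ρ · e^{−(log ρ + b)/4} = 0`. -/
theorem stmt_19 (g : ℝ → ℝ) (C b ε : ℝ)
    (hg01 : ∀ x, 0 ≤ x → 0 ≤ g x ∧ g x ≤ 1)
    (hmono : AntitoneOn g (Set.Ici 0))
    (hsmall : Tendsto (fun x : ℝ => g x * x ^ 2 * (Real.log x) ^ 2) atTop (nhds 0))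
    (hint : Integrable (fun x : EuclideanSpace ℝ (Fin 2) => g ‖x‖))
    (hC : C = ∫ x : EuclideanSpace ℝ (Fin 2), g ‖x‖) (hCpos : 0 < C)
    (hε : 0 < ε) (hε4 : ε < 1 / 4) :
    Tendsto
        (fun ρ : ℝ =>
          ρ ^ ((1 : ℝ) / 2) *
            Real.exp
              (-((1 / 2) * ((Real.log ρ + b) / C) *
                  ∫ x in Metric.closedBall (0 : EuclideanSpace ℝ (Fin 2))
                      ((Real.sqrt ((Real.log ρ + b) / (C * ρ))) ^ (-ε : ℝ)),
                    g ‖x‖)))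
        atTop (nhds (Real.exp (-b / 2))) ∧
      Tendsto
        (fun ρ : ℝ =>
          4 * ((Real.log ρ + b) / (C * ρ)) ^ ((1 : ℝ) - ε) * ρ *
            Real.exp (-(Real.log ρ + b) / 4))
        atTop (nhds 0) :=
  stmt_19_general g C b ε hg01 hsmall hint hC hCpos hε hε4
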